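/- Let φ : 𝔛 → 𝔛' be an algebraic isomorphism of m-ary coherent configurations on Ω and Ω', and let 2 ≤ k ≤ m. Then the map φ_k : pr_k(𝔛) → pr_k(𝔛') given by φ_k(pr_k(X)) = pr_k(φ(X)) for X ∈ 𝔛 is a well-defined bijection and is an algebraic isomorphism between the k-ary coherent configurations pr_k(𝔛) and pr_k(𝔛'). -/
import Mathlib


open Set

universe u

/-- An `m`-ary coherent configuration on a finite set `Ω`: a partition of `Ω^m`
satisfying (C1') constancy of the equality type `ρ`, (C2') closure under the
action of maps `σ : M → M`, (C3') well-defined numbers `n^{X₀}_{X₁,…,X_m}`. -/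
structure MaryCC (m : ℕ) (Ω : Type u) : Type u where
  classes : Set (Set (Fin m → Ω))
  finite : Finite Ω
  cover : ∀ x : Fin m → Ω, ∃ X ∈ classes, x ∈ X
  disj : ∀ X ∈ classes, ∀ Y ∈ classes, X ≠ Y → X ∩ Y = ∅
  nonemp : ∀ X ∈ classes, X.Nonempty
  rho : ∀ X ∈ classes, ∀ x ∈ X, ∀ y ∈ X, ∀ i j : Fin m, (x i = x j ↔ y i = y j)
  sigma : ∀ X ∈ classes, ∀ σ : Fin m → Fin m,
    (fun x : Fin m → Ω => x ∘ σ) '' X ∈ classes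
  nnum : ∀ X₀ ∈ classes, ∀ Y : Fin m → Set (Fin m → Ω), (∀ i, Y i ∈ classes) →
    ∀ x ∈ X₀, ∀ x' ∈ X₀,
      {α : Ω | ∀ i, Function.update x i α ∈ Y i}.ncard =
      {α : Ω | ∀ i, Function.update x' i α ∈ Y i}.ncard

namespace MaryCC

variable {Ω Ω' : Type u} {m k : ℕ}

/-- The number `n(x; Y₁,…,Y_m)` of points `α` with `x_{i←α} ∈ Y i` for all `i`. -/
noncomputable def nnumVal (x : Fin m → Ω) (Y : Fin m → Set (Fin m → Ω)) : ℕ :=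
  {α : Ω | ∀ i, Function.update x i α ∈ Y i}.ncard

/-- An algebraic isomorphism of `m`-ary coherent configurations. -/
structure IsMAlgIso (𝔛 : MaryCC m Ω) (𝔛' : MaryCC m Ω')
    (φ : Set (Fin m → Ω) → Set (Fin m → Ω')) : Prop where
  bijOn : Set.BijOn φ 𝔛.classes 𝔛'.classes
  sigma_eq : ∀ X ∈ 𝔛.classes, ∀ σ : Fin m → Fin m,
    φ ((fun x : Fin m → Ω => x ∘ σ) '' X) = (fun x : Fin m → Ω' => x ∘ σ) '' φ X
  nnum_eq : ∀ X₀ ∈ 𝔛.classes, ∀ Y : Fin m → Set (Fin m → Ω), (∀ i, Y i ∈ 𝔛.classes) →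
    ∀ x ∈ X₀, ∀ x' ∈ φ X₀, nnumVal x Y = nnumVal x' fun i => φ (Y i)

/-- The projection onto the first `k` coordinates. -/
def prK (h : k ≤ m) (x : Fin m → Ω) : Fin k → Ω :=
  fun i => x (Fin.castLE h i)

/-- The projection onto the last `m - k` coordinates. -/
def prTail (h : k ≤ m) (x : Fin m → Ω) : Fin (m - k) → Ω :=
  fun i => x ⟨k + i.1, by have := i.2; omega⟩

/-- Combining a `k`-tuple with an `(m-k)`-tuple into an `m`-tuple. -/
def glue (h : k ≤ m) (xb : Fin k → Ω) (y : Fin (m - k) → Ω) : Fin m → Ω :=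
  fun j => if hj : j.1 < k then xb ⟨j.1, hj⟩ else y ⟨j.1 - k, by have := j.2; omega⟩

/-- The residue `X_y` of `X ⊆ Ω^m` with respect to `y ∈ Ω^{m-k}`. -/
def residue (h : k ≤ m) (X : Set (Fin m → Ω)) (y : Fin (m - k) → Ω) :
    Set (Fin k → Ω) :=
  {xb | glue h xb y ∈ X}

end MaryCC

namespace MaryCC

variable {Ω Ω' : Type u} {m k : ℕ}

lemma prK_glue (h : k ≤ m) (xb : Fin k → Ω) (y : Fin (m - k) → Ω) :
    prK h (glue h xb y) = xb := by
  funext i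
  have hi : (Fin.castLE h i).1 < k := i.2
  simp only [prK, glue, dif_pos hi]
  exact congrArg xb (Fin.ext rfl)

/-- The map collapsing the last `m - k` coordinates onto coordinate `0`. -/
def cylσ (hk : 0 < k) (hkm : k ≤ m) : Fin m → Fin m :=
  fun j => if j.1 < k then j else ⟨0, lt_of_lt_of_le hk hkm⟩

/-- Embedding of `k`-tuples into `m`-tuples, repeating the first coordinate. -/
def emb (hk : 0 < k) (hkm : k ≤ m) (xb : Fin k → Ω) : Fin m → Ω :=
  glue hkm xb fun _ => xb ⟨0, hk⟩

lemma comp_cylσ (hk : 0 < k) (hkm : k ≤ m) (x : Fin m → Ω) :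
    x ∘ cylσ hk hkm = emb hk hkm (prK hkm x) := by
  funext j
  simp only [Function.comp_apply, cylσ, emb, glue, prK]
  by_cases hj : j.1 < k
  · rw [if_pos hj, dif_pos hj]
    exact congrArg x (Fin.ext rfl)
  · rw [if_neg hj, dif_neg hj]
    exact congrArg x (Fin.ext rfl)

lemma prK_emb (hk : 0 < k) (hkm : k ≤ m) (xb : Fin k → Ω) :
    prK hkm (emb hk hkm xb) = xb := prK_glue hkm xb _

lemma prK_image_emb (hk : 0 < k) (hkm : k ≤ m) (A : Set (Fin k → Ω)) :
    prK hkm '' (emb hk hkm '' A) = A := by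
  rw [← Set.image_comp]
  have : (prK hkm ∘ emb hk hkm : (Fin k → Ω) → Fin k → Ω) = id := by
    funext xb; exact prK_emb hk hkm xb
  rw [this, Set.image_id]

lemma cyl_image (hk : 0 < k) (hkm : k ≤ m) (X : Set (Fin m → Ω)) :
    (fun x : Fin m → Ω => x ∘ cylσ hk hkm) '' X = emb hk hkm '' (prK hkm '' X) := by
  rw [← Set.image_comp]
  exact Set.image_congr fun x _ => comp_cylσ hk hkm x

lemma prK_image_eq_iff (hk : 0 < k) (hkm : k ≤ m) (X X₁ : Set (Fin m → Ω)) :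
    prK hkm '' X = prK hkm '' X₁ ↔
      (fun x : Fin m → Ω => x ∘ cylσ hk hkm) '' X
        = (fun x : Fin m → Ω => x ∘ cylσ hk hkm) '' X₁ := by
  rw [cyl_image hk hkm, cyl_image hk hkm]
  constructor
  · intro h; rw [h]
  · intro h
    have h2 := congrArg (Set.image (prK hkm)) h
    rwa [prK_image_emb hk hkm, prK_image_emb hk hkm] at h2

lemma update_prK (hkm : k ≤ m) (x : Fin m → Ω) (i : Fin k) (α : Ω) :
    Function.update (prK hkm x) i α
      = prK hkm (Function.update x (Fin.castLE hkm i) α) := by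
  funext i'
  simp only [prK, Function.update_apply]
  by_cases h : i' = i
  · subst h; simp
  · rw [if_neg h, if_neg (fun hc => h (Fin.castLE_injective hkm hc))]

lemma class_eq (𝔛 : MaryCC m Ω) {X Y : Set (Fin m → Ω)} (hX : X ∈ 𝔛.classes)
    (hY : Y ∈ 𝔛.classes) {w : Fin m → Ω} (hwX : w ∈ X) (hwY : w ∈ Y) : X = Y := by
  by_contra hne
  have := 𝔛.disj X hX Y hY hne
  exact absurd (Set.mem_inter hwX hwY) (by rw [this]; exact Set.notMem_empty w)

lemma ncard_decomp (hkm : k ≤ m) (𝔛 : MaryCC m Ω)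
    (Z : Fin k → Set (Fin k → Ω))
    (hZ : ∀ i, ∀ X ∈ 𝔛.classes, ∀ w ∈ X, prK hkm w ∈ Z i → prK hkm '' X = Z i)
    (xh : Fin m → Ω) :
    {α : Ω | ∀ i : Fin k, Function.update (prK hkm xh) i α ∈ Z i}.ncard
      = ∑ᶠ W ∈ {W : Fin m → Set (Fin m → Ω) |
          (∀ j, W j ∈ 𝔛.classes) ∧ ∀ i : Fin k, prK hkm '' W (Fin.castLE hkm i) = Z i},
          nnumVal xh W := by
  classical
  haveI : Finite Ω := 𝔛.finite
  haveI : Fintype Ω := Fintype.ofFinite Ω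
  haveI : Fintype (Fin m → Set (Fin m → Ω)) := Fintype.ofFinite _
  set prof : Ω → (Fin m → Set (Fin m → Ω)) :=
    fun α j => (𝔛.cover (Function.update xh j α)).choose with hprof
  have hprof_mem : ∀ α j, prof α j ∈ 𝔛.classes := fun α j => (𝔛.cover _).choose_spec.1
  have hprof_in : ∀ α j, Function.update xh j α ∈ prof α j :=
    fun α j => (𝔛.cover _).choose_spec.2
  set T : Finset (Fin m → Set (Fin m → Ω)) := Finset.univ.filter
    (fun W => (∀ j, W j ∈ 𝔛.classes) ∧
      ∀ i : Fin k, prK hkm '' W (Fin.castLE hkm i) = Z i) with hT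
  set S : Finset Ω := Finset.univ.filter
    (fun α => ∀ i : Fin k, Function.update (prK hkm xh) i α ∈ Z i) with hS
  have hLHS : {α : Ω | ∀ i : Fin k, Function.update (prK hkm xh) i α ∈ Z i} = (S : Set Ω) := by
    ext α; simp [hS]
  have hmapsto : ∀ α ∈ S, prof α ∈ T := by
    intro α hα
    simp only [hS, Finset.mem_filter, Finset.mem_univ, true_and] at hα
    simp only [hT, Finset.mem_filter, Finset.mem_univ, true_and]
    refine ⟨fun j => hprof_mem α j, fun i => ?_⟩
    refine hZ i _ (hprof_mem α _) _ (hprof_in α _) ?_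
    rw [← update_prK]
    exact hα i
  have hfib : ∀ W ∈ T, (S.filter (fun α => prof α = W)).card = nnumVal xh W := by
    intro W hW
    simp only [hT, Finset.mem_filter, Finset.mem_univ, true_and] at hW
    rw [nnumVal, show {α : Ω | ∀ j, Function.update xh j α ∈ W j}
        = ((S.filter (fun α => prof α = W)) : Set Ω) from ?_, Set.ncard_coe_finset]
    ext α
    simp only [Set.mem_setOf_eq, Finset.coe_filter, Finset.mem_filter, Finset.mem_univ,
      true_and, hS]
    constructor
    · intro h
      have hWeq : prof α = W := by
        funext j
        exact class_eq 𝔛 (hprof_mem α j) (hW.1 j) (hprof_in α j) (h j)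
      refine ⟨fun i => ?_, hWeq⟩
      rw [update_prK hkm xh i α, ← hW.2 i]
      exact ⟨_, h _, rfl⟩
    · rintro ⟨-, rfl⟩ j
      exact hprof_in α j
  have hset : {W : Fin m → Set (Fin m → Ω) |
      (∀ j, W j ∈ 𝔛.classes) ∧ ∀ i : Fin k, prK hkm '' W (Fin.castLE hkm i) = Z i}
        = (T : Set _) := by
    ext W; simp [hT]
  rw [hLHS, Set.ncard_coe_finset, hset, finsum_mem_coe_finset,
    Finset.card_eq_sum_card_fiberwise hmapsto]
  exact Finset.sum_congr rfl fun W hW => hfib W hW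

lemma nnum_transfer (hk : 0 < k) (hkm : k ≤ m)
    (𝔛 : MaryCC m Ω) (𝔛' : MaryCC m Ω') (φ : Set (Fin m → Ω) → Set (Fin m → Ω'))
    (hφ : IsMAlgIso 𝔛 𝔛' φ)
    (Z : Fin k → Set (Fin k → Ω)) (V : Fin k → Set (Fin m → Ω))
    (hV : ∀ i, V i ∈ 𝔛.classes) (hZV : ∀ i, prK hkm '' V i = Z i)
    (hZd : ∀ i, ∀ X ∈ 𝔛.classes, ∀ w ∈ X, prK hkm w ∈ Z i → prK hkm '' X = Z i)
    (hZd' : ∀ i, ∀ X' ∈ 𝔛'.classes, ∀ w ∈ X',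
        prK hkm w ∈ prK hkm '' φ (V i) → prK hkm '' X' = prK hkm '' φ (V i))
    (X₀ : Set (Fin m → Ω)) (hX₀ : X₀ ∈ 𝔛.classes)
    (xh : Fin m → Ω) (hx : xh ∈ X₀) (xh' : Fin m → Ω') (hx' : xh' ∈ φ X₀) :
    {α : Ω | ∀ i : Fin k, Function.update (prK hkm xh) i α ∈ Z i}.ncard =
    {α' : Ω' | ∀ i : Fin k,
        Function.update (prK hkm xh') i α' ∈ prK hkm '' φ (V i)}.ncard := by
  have hkey : ∀ X ∈ 𝔛.classes, ∀ X₁ ∈ 𝔛.classes,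
      (prK hkm '' X = prK hkm '' X₁ ↔ prK hkm '' φ X = prK hkm '' φ X₁) := by
    intro X hX X₁ hX₁
    rw [prK_image_eq_iff hk hkm X X₁, prK_image_eq_iff hk hkm (φ X) (φ X₁),
      ← hφ.sigma_eq X hX, ← hφ.sigma_eq X₁ hX₁]
    constructor
    · intro h; rw [h]
    · intro h
      exact hφ.bijOn.injOn (𝔛.sigma X hX _) (𝔛.sigma X₁ hX₁ _) h
  rw [ncard_decomp hkm 𝔛 Z hZd xh,
      ncard_decomp hkm 𝔛' (fun i => prK hkm '' φ (V i)) hZd' xh']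
  refine finsum_mem_eq_of_bijOn (fun W => fun j => φ (W j)) ⟨?_, ?_, ?_⟩ ?_
  · rintro W ⟨hW1, hW2⟩
    refine ⟨fun j => hφ.bijOn.mapsTo (hW1 j), fun i => ?_⟩
    exact (hkey _ (hW1 _) _ (hV i)).mp (by rw [hW2 i, hZV i])
  · rintro W ⟨hW1, -⟩ W₁ ⟨hW11, -⟩ h
    funext j
    exact hφ.bijOn.injOn (hW1 j) (hW11 j) (congrFun h j)
  · rintro W' ⟨hW'1, hW'2⟩
    have hch : ∀ j, ∃ X, X ∈ 𝔛.classes ∧ φ X = W' j := by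
      intro j
      rcases hφ.bijOn.surjOn (hW'1 j) with ⟨X, hX, hXe⟩
      exact ⟨X, hX, hXe⟩
    choose W hWc hWe using hch
    refine ⟨W, ⟨hWc, fun i => ?_⟩, funext hWe⟩
    rw [← hZV i]
    exact (hkey _ (hWc _) _ (hV i)).mpr (by rw [hWe, hW'2 i])
  · rintro W ⟨hW1, -⟩
    exact hφ.nnum_eq X₀ hX₀ W hW1 xh hx xh' hx'

/-- Lift of a map `Fin k → Fin k` to `Fin m → Fin m`, identity on the tail. -/
def liftσ (hkm : k ≤ m) (τ : Fin k → Fin k) : Fin m → Fin m :=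
  fun j => if h : j.1 < k then Fin.castLE hkm (τ ⟨j.1, h⟩) else j

lemma prK_comp_liftσ (hkm : k ≤ m) (τ : Fin k → Fin k) (x : Fin m → Ω) :
    prK hkm (x ∘ liftσ hkm τ) = prK hkm x ∘ τ := by
  funext i
  have hh : (Fin.castLE hkm i).1 < k := i.2
  simp only [prK, Function.comp_apply, liftσ, dif_pos hh]
  exact congrArg x (congrArg (Fin.castLE hkm) (congrArg τ (Fin.ext rfl)))

lemma prK_image_comp (hkm : k ≤ m) (τ : Fin k → Fin k) (X : Set (Fin m → Ω)) :
    (fun xb : Fin k → Ω => xb ∘ τ) '' (prK hkm '' X)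
      = prK hkm '' ((fun x : Fin m → Ω => x ∘ liftσ hkm τ) '' X) := by
  rw [← Set.image_comp, ← Set.image_comp]
  exact Set.image_congr fun x _ => (prK_comp_liftσ hkm τ x).symm

/-- The projection of an algebraic isomorphism, as a map on sets of `k`-tuples. -/
noncomputable def projIso (hkm : k ≤ m) (𝔛 : MaryCC m Ω)
    (φ : Set (Fin m → Ω) → Set (Fin m → Ω')) (Z : Set (Fin k → Ω)) :
    Set (Fin k → Ω') :=
  letI := Classical.propDecidable (∃ X, X ∈ 𝔛.classes ∧ prK hkm '' X = Z)
  if h : ∃ X, X ∈ 𝔛.classes ∧ prK hkm '' X = Z then prK hkm '' φ h.choose else ∅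

lemma projIso_eq (hkm : k ≤ m) (𝔛 : MaryCC m Ω)
    (φ : Set (Fin m → Ω) → Set (Fin m → Ω'))
    (hwd : ∀ X ∈ 𝔛.classes, ∀ X₁ ∈ 𝔛.classes,
      prK hkm '' X = prK hkm '' X₁ → prK hkm '' φ X = prK hkm '' φ X₁)
    (X : Set (Fin m → Ω)) (hX : X ∈ 𝔛.classes) :
    projIso hkm 𝔛 φ (prK hkm '' X) = prK hkm '' φ X := by
  have h : ∃ X₁, X₁ ∈ 𝔛.classes ∧ prK hkm '' X₁ = prK hkm '' X := ⟨X, hX, rfl⟩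
  simp only [projIso]
  rw [dif_pos h]
  exact hwd _ h.choose_spec.1 X hX h.choose_spec.2

end MaryCC

open MaryCC in
/-- Lemma: for an algebraic isomorphism `φ : 𝔛 → 𝔛'` of `m`-ary coherent
configurations and `2 ≤ k ≤ m`, the map `φ_k : pr_k(𝔛) → pr_k(𝔛')`, defined by
`φ_k(pr_k X) = pr_k(φ X)`, is a well-defined bijection (it exists as a function)
and is an algebraic isomorphism between the `k`-ary coherent configurations
`pr_k(𝔛)` and `pr_k(𝔛')`. -/
theorem stmt_2 {Ω Ω' : Type u} {m k : ℕ} (hk2 : 2 ≤ k) (hkm : k ≤ m)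
    (𝔛 : MaryCC m Ω) (𝔛' : MaryCC m Ω')
    (φ : Set (Fin m → Ω) → Set (Fin m → Ω')) (hφ : IsMAlgIso 𝔛 𝔛' φ)
    (𝔜 : MaryCC k Ω)
    (h𝔜 : 𝔜.classes = (fun X : Set (Fin m → Ω) => prK hkm '' X) '' 𝔛.classes)
    (𝔜' : MaryCC k Ω')
    (h𝔜' : 𝔜'.classes = (fun X : Set (Fin m → Ω') => prK hkm '' X) '' 𝔛'.classes) :
    ∃ φk : Set (Fin k → Ω) → Set (Fin k → Ω'),
      (∀ X ∈ 𝔛.classes, φk (prK hkm '' X) = prK hkm '' φ X) ∧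
      IsMAlgIso 𝔜 𝔜' φk := by
  classical
  have hk : 0 < k := by omega
  have hkey : ∀ X ∈ 𝔛.classes, ∀ X₁ ∈ 𝔛.classes,
      (prK hkm '' X = prK hkm '' X₁ ↔ prK hkm '' φ X = prK hkm '' φ X₁) := by
    intro X hX X₁ hX₁
    rw [prK_image_eq_iff hk hkm X X₁, prK_image_eq_iff hk hkm (φ X) (φ X₁),
      ← hφ.sigma_eq X hX, ← hφ.sigma_eq X₁ hX₁]
    constructor
    · intro h; rw [h]
    · intro h
      exact hφ.bijOn.injOn (𝔛.sigma X hX _) (𝔛.sigma X₁ hX₁ _) h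
  have hwd : ∀ X ∈ 𝔛.classes, ∀ X₁ ∈ 𝔛.classes,
      prK hkm '' X = prK hkm '' X₁ → prK hkm '' φ X = prK hkm '' φ X₁ :=
    fun X hX X₁ hX₁ h => (hkey X hX X₁ hX₁).mp h
  have hdef : ∀ X ∈ 𝔛.classes,
      projIso hkm 𝔛 φ (prK hkm '' X) = prK hkm '' φ X :=
    fun X hX => projIso_eq hkm 𝔛 φ hwd X hX
  refine ⟨projIso hkm 𝔛 φ, hdef, ⟨?_, ?_, ?_⟩, ?_, ?_⟩
  · -- MapsTo
    intro Z hZ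
    rw [h𝔜] at hZ
    obtain ⟨X, hX, rfl⟩ := hZ
    rw [hdef X hX, h𝔜']
    exact ⟨φ X, hφ.bijOn.mapsTo hX, rfl⟩
  · -- InjOn
    intro Z hZ Z₁ hZ₁ h
    rw [h𝔜] at hZ hZ₁
    obtain ⟨X, hX, rfl⟩ := hZ
    obtain ⟨X₁, hX₁, rfl⟩ := hZ₁
    rw [hdef X hX, hdef X₁ hX₁] at h
    exact (hkey X hX X₁ hX₁).mpr h
  · -- SurjOn
    intro Z' hZ'
    rw [h𝔜'] at hZ'
    obtain ⟨X', hX', rfl⟩ := hZ'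
    obtain ⟨X, hX, rfl⟩ := hφ.bijOn.surjOn hX'
    exact ⟨prK hkm '' X, by rw [h𝔜]; exact ⟨X, hX, rfl⟩, hdef X hX⟩
  · -- sigma_eq
    intro Z hZ τ
    rw [h𝔜] at hZ
    obtain ⟨X, hX, rfl⟩ := hZ
    rw [prK_image_comp hkm τ X, hdef _ (𝔛.sigma X hX (liftσ hkm τ)),
      hφ.sigma_eq X hX (liftσ hkm τ), ← prK_image_comp hkm τ (φ X), hdef X hX]
  · -- nnum_eq
    intro Z₀ hZ₀ Z hZc x hx x' hx'
    rw [h𝔜] at hZ₀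
    obtain ⟨X₀, hX₀, hE⟩ := hZ₀
    have hE' : prK hkm '' X₀ = Z₀ := hE
    subst hE'
    have hVex : ∀ i, ∃ V, V ∈ 𝔛.classes ∧ prK hkm '' V = Z i := by
      intro i
      have hi := hZc i
      rw [h𝔜] at hi
      exact hi
    choose V hVc hVZ using hVex
    have hφkZ : ∀ i, projIso hkm 𝔛 φ (Z i) = prK hkm '' φ (V i) := by
      intro i
      rw [← hVZ i, hdef _ (hVc i)]
    have hZd : ∀ i, ∀ X ∈ 𝔛.classes, ∀ w ∈ X, prK hkm w ∈ Z i → prK hkm '' X = Z i := by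
      intro i X hX w hw hmem
      have h1 : prK hkm '' X ∈ 𝔜.classes := by rw [h𝔜]; exact ⟨X, hX, rfl⟩
      exact class_eq 𝔜 h1 (hZc i) (Set.mem_image_of_mem _ hw) hmem
    have hZd' : ∀ i, ∀ X' ∈ 𝔛'.classes, ∀ w ∈ X',
        prK hkm w ∈ prK hkm '' φ (V i) → prK hkm '' X' = prK hkm '' φ (V i) := by
      intro i X' hX' w hw hmem
      have h1 : prK hkm '' X' ∈ 𝔜'.classes := by rw [h𝔜']; exact ⟨X', hX', rfl⟩
      have h2 : prK hkm '' φ (V i) ∈ 𝔜'.classes := by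
        rw [h𝔜']; exact ⟨φ (V i), hφ.bijOn.mapsTo (hVc i), rfl⟩
      exact class_eq 𝔜' h1 h2 (Set.mem_image_of_mem _ hw) hmem
    have hXc0 : (fun x : Fin m → Ω => x ∘ cylσ hk hkm) '' X₀ ∈ 𝔛.classes :=
      𝔛.sigma X₀ hX₀ (cylσ hk hkm)
    have hembx : emb hk hkm x ∈ (fun x : Fin m → Ω => x ∘ cylσ hk hkm) '' X₀ := by
      rw [cyl_image hk hkm]
      exact Set.mem_image_of_mem _ hx
    have hx'2 : x' ∈ prK hkm '' φ X₀ := by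
      rw [← hdef X₀ hX₀]
      exact hx'
    have hembx' : emb hk hkm x' ∈ φ ((fun x : Fin m → Ω => x ∘ cylσ hk hkm) '' X₀) := by
      rw [hφ.sigma_eq X₀ hX₀ (cylσ hk hkm), cyl_image hk hkm]
      exact Set.mem_image_of_mem _ hx'2
    have key := nnum_transfer hk hkm 𝔛 𝔛' φ hφ Z V hVc hVZ hZd hZd'
      _ hXc0 (emb hk hkm x) hembx (emb hk hkm x') hembx'
    rw [prK_emb hk hkm x, prK_emb hk hkm x'] at key
    simpa only [nnumVal, hφkZ] using key
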